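/- Any two cores of a finite digraph G are isomorphic. -/

import Mathlib

/-- A finite digraph: a finite vertex type with an irreflexive arc relation. -/
structure Digr where
  V : Type
  [instFintype : Fintype V]
  A : V → V → Prop
  loopless : ∀ v, ¬ A v v

attribute [instance] Digr.instFintype

/-- `f` is a homomorphism of digraphs from `G` to `H`. -/
def IsHom (G H : Digr) (f : G.V → H.V) : Prop :=
  ∀ ⦃u v⦄, G.A u v → H.A (f u) (f v)

/-- `G ≤ H` in the homomorphism (quasi)order. -/
def DLe (G H : Digr) : Prop := ∃ f, IsHom G H f

/-- Induced subgraph on a finite vertex set. -/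
def Digr.induce (G : Digr) (S : Finset G.V) : Digr where
  V := {x // x ∈ S}
  A u v := G.A u.1 v.1
  loopless := fun v h => G.loopless v.1 h

/-- The underlying undirected simple graph of a digraph. -/
def Digr.underlying (G : Digr) : SimpleGraph G.V where
  Adj u v := G.A u v ∨ G.A v u
  symm := ⟨fun u v h => h.symm⟩
  loopless := ⟨fun v h => h.elim (G.loopless v) (G.loopless v)⟩

/-- An oriented tree: the underlying undirected graph is a tree. -/
def IsTreeD (G : Digr) : Prop := G.underlying.IsTree

/-- An oriented path: a tree all of whose vertices have (undirected) degree at most 2. -/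
def IsPathD (G : Digr) : Prop :=
  IsTreeD G ∧ ∀ v : G.V, {u | G.underlying.Adj v u}.ncard ≤ 2

/-- A core: every endomorphism is bijective (an automorphism). -/
def IsCore (G : Digr) : Prop := ∀ f, IsHom G G f → Function.Bijective f

/-- Homomorphic equivalence. -/
def HomEquiv (G H : Digr) : Prop := DLe G H ∧ DLe H G

/-- `C` is (up to homomorphic equivalence) the core of `G`. -/
def IsCoreOf (C G : Digr) : Prop := HomEquiv C G ∧ IsCore C

/-- A proper tree: an oriented tree whose core is not an oriented path. -/
def ProperTree (T : Digr) : Prop :=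
  IsTreeD T ∧ ∀ C, IsCoreOf C T → ¬ IsPathD C

/-- Isomorphism of digraphs. -/
def IsIso (G H : Digr) : Prop :=
  ∃ e : G.V ≃ H.V, IsHom G H e ∧ IsHom H G e.symm

/-- Disjoint union of digraphs. -/
def Digr.dsum (G H : Digr) : Digr where
  V := G.V ⊕ H.V
  A u v :=
    match u, v with
    | .inl a, .inl b => G.A a b
    | .inr a, .inr b => H.A a b
    | _, _ => False
  loopless := by
    rintro (v | v) h
    exacts [G.loopless v h, H.loopless v h]

/-- A bijective endo-homomorphism of a finite digraph reflects arcs. -/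
lemma strong_of_bij (C : Digr) (p : C.V → C.V) (hp : IsHom C C p)
    (hpi : Function.Injective p) : ∀ u v, C.A (p u) (p v) → C.A u v := by
  intro u v h
  set s : Set (C.V × C.V) := {x | C.A x.1 x.2} with hs
  have hfin : s.Finite := Set.toFinite _
  have hmaps : Set.MapsTo (fun x : C.V × C.V => (p x.1, p x.2)) s s :=
    fun x hx => hp hx
  have hinj : Set.InjOn (fun x : C.V × C.V => (p x.1, p x.2)) s := by
    intro a _ b _ hab
    have := Prod.ext_iff.mp hab
    exact Prod.ext (hpi this.1) (hpi this.2)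
  have hbij := (hfin.injOn_iff_bijOn_of_mapsTo hmaps).mp hinj
  obtain ⟨⟨a, b⟩, hab, heq⟩ := hbij.surjOn (show (p u, p v) ∈ s from h)
  simp only [Prod.mk.injEq] at heq
  rwa [hpi heq.1, hpi heq.2] at hab

/-- Any two cores (minimum-size induced subgraphs homomorphically equivalent
to `G`) of a finite digraph are isomorphic. -/
theorem cores_isomorphic (G : Digr) (S1 S2 : Finset G.V)
    (h1 : HomEquiv (G.induce S1) G) (h2 : HomEquiv (G.induce S2) G)
    (hmin1 : ∀ S : Finset G.V, HomEquiv (G.induce S) G → S1.card ≤ S.card)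
    (hmin2 : ∀ S : Finset G.V, HomEquiv (G.induce S) G → S2.card ≤ S.card) :
    IsIso (G.induce S1) (G.induce S2) := by
  classical
  obtain ⟨⟨a1, ha1⟩, ⟨b1, hb1⟩⟩ := h1
  obtain ⟨⟨a2, ha2⟩, ⟨b2, hb2⟩⟩ := h2
  -- f : C1 → C2, g : C2 → C1
  set f : (G.induce S1).V → (G.induce S2).V := fun x => b2 (a1 x) with hf
  set g : (G.induce S2).V → (G.induce S1).V := fun x => b1 (a2 x) with hg
  have hfh : IsHom (G.induce S1) (G.induce S2) f := fun u v h => hb2 (ha1 h)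
  have hgh : IsHom (G.induce S2) (G.induce S1) g := fun u v h => hb1 (ha2 h)
  set p : (G.induce S1).V → (G.induce S1).V := fun x => g (f x) with hpdef
  have hph : IsHom (G.induce S1) (G.induce S1) p := fun u v h => hgh (hfh h)
  -- the image of p gives a hom-equivalent induced subgraph
  set T : Finset G.V := Finset.image (fun x : (G.induce S1).V => (p x).1) Finset.univ
    with hT
  have hmemT : ∀ x : (G.induce S1).V, (p x).1 ∈ T := fun x =>
    Finset.mem_image_of_mem _ (Finset.mem_univ x)
  have hTequiv : HomEquiv (G.induce T) G := by
    constructor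
    · exact ⟨fun x => x.1, fun u v h => h⟩
    · refine ⟨fun x => ⟨(p (b1 x)).1, hmemT _⟩, fun u v h => ?_⟩
      exact hph (hb1 h)
  have hcards : S1.card ≤ T.card := hmin1 T hTequiv
  have hTle : T.card ≤ S1.card := by
    calc T.card ≤ (Finset.univ : Finset (G.induce S1).V).card := Finset.card_image_le
    _ = Fintype.card (G.induce S1).V := rfl
    _ = S1.card := Fintype.card_coe S1
  have hTcard : T.card = Fintype.card (G.induce S1).V := by
    have : Fintype.card (G.induce S1).V = S1.card := Fintype.card_coe S1
    omega
  -- p is injective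
  have hpinj : Function.Injective p := by
    have hinj : Set.InjOn (fun x : (G.induce S1).V => (p x).1)
        (Finset.univ : Finset (G.induce S1).V) := by
      apply Finset.injOn_of_card_image_eq
      rw [← hT, hTcard, Finset.card_univ]
    intro a b hab
    exact hinj (Finset.mem_univ a) (Finset.mem_univ b) (congrArg Subtype.val hab)
  have hfinj : Function.Injective f := fun a b hab =>
    hpinj (by simp [hpdef, hab])
  -- equal cardinalities
  have hcard12 : Fintype.card (G.induce S1).V = Fintype.card (G.induce S2).V := by
    have e1 : Fintype.card (G.induce S1).V = S1.card := Fintype.card_coe S1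
    have e2 : Fintype.card (G.induce S2).V = S2.card := Fintype.card_coe S2
    rw [e1, e2]
    exact le_antisymm (hmin1 S2 ⟨⟨a2, ha2⟩, ⟨b2, hb2⟩⟩) (hmin2 S1 ⟨⟨a1, ha1⟩, ⟨b1, hb1⟩⟩)
  have hfbij : Function.Bijective f :=
    (Fintype.bijective_iff_injective_and_card f).mpr ⟨hfinj, hcard12⟩
  refine ⟨Equiv.ofBijective f hfbij, hfh, ?_⟩
  intro u v h
  have h2 : (G.induce S1).A (p ((Equiv.ofBijective f hfbij).symm u))
      (p ((Equiv.ofBijective f hfbij).symm v)) := by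
    have e1 : f ((Equiv.ofBijective f hfbij).symm u) = u :=
      (Equiv.ofBijective f hfbij).apply_symm_apply u
    have e2 : f ((Equiv.ofBijective f hfbij).symm v) = v :=
      (Equiv.ofBijective f hfbij).apply_symm_apply v
    simp only [hpdef]
    rw [e1, e2]
    exact hgh h
  exact strong_of_bij _ p hph hpinj _ _ h2
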